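/- arXiv:2301.12813 — 11 statements merged into one kernel-verified Lean document; each statement's English description precedes it below -/
import Mathlib

section
/- Let R > 0, c > 0 and n ≥ 2. In the n-player game where each player i chooses x_i ∈ [0,∞) and receives payoff U_i(x) = R·x_i/(x_1+⋯+x_n) − c·x_i (with payoff 0 at the all-zero profile), the profile with x_i = R(n−1)/(c·n²) for every i is a Nash equilibrium, it is the unique Nash equilibrium, and in it every player's payoff equals R/n². -/
lemma sum_update_fin (n : ℕ) (x : Fin n → ℝ) (i : Fin n) (z : ℝ) :
    ∑ j, Function.update x i z j = (∑ j, x j) - x i + z := by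
  rw [Finset.sum_update_of_mem (Finset.mem_univ i), ← Finset.erase_eq,
      Finset.sum_erase_eq_sub (Finset.mem_univ i)]
  ring

lemma maximize (R c s xs : ℝ) (hc : 0 < c) (hs : 0 < s) (hxs : 0 ≤ xs)
    (hRs : R * s = c * (s + xs)^2) :
    ∀ z, 0 ≤ z → R * z / (s + z) - c * z ≤ R * xs / (s + xs) - c * xs := by
  intro z hz
  have h1 : 0 < s + z := by linarith
  have h2 : 0 < s + xs := by linarith
  have hRe : R = c * (s + xs)^2 / s := by rw [eq_div_iff hs.ne']; linarith [hRs]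
  have key : R * xs / (s + xs) - c * xs - (R * z / (s + z) - c * z)
      = c * (z - xs)^2 / (s + z) := by
    rw [hRe]; field_simp; ring
  nlinarith [div_nonneg (mul_nonneg hc.le (sq_nonneg (z - xs))) h1.le, key]

lemma foc (R c s X : ℝ) (hc : 0 < c) (hs : 0 < s) (hX : 0 ≤ X)
    (hne : ∀ z, 0 ≤ z → R * z / (s + z) - c * z ≤ R * X / (s + X) - c * X) :
    R * s ≤ c * (s + X)^2 ∧ (0 < X → R * s = c * (s + X)^2) := by
  obtain ⟨S, hS⟩ : ∃ S, S = s + X := ⟨_, rfl⟩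
  rw [← hS] at hne ⊢
  have hS0 : 0 < S := by rw [hS]; linarith
  have hfac : ∀ z, 0 ≤ z → (z - X) * (R * s - c * S * (s + z)) ≤ 0 := by
    intro z hz
    have h1 : 0 < s + z := by linarith
    have h := hne z hz
    have h2 := mul_le_mul_of_nonneg_right h (mul_pos h1 hS0).le
    have e1 : (R * z / (s + z) - c * z) * ((s + z) * S) = R * z * S - c * z * (s + z) * S := by
      field_simp
    have e2 : (R * X / S - c * X) * ((s + z) * S) = (R * X - c * X * S) * (s + z) := by
      field_simp
    have e3 : (z - X) * (R * s - c * S * (s + z))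
        = (R * z * S - c * z * (s + z) * S) - (R * X - c * X * S) * (s + z) := by
      rw [hS]; ring
    rw [e1, e2] at h2
    linarith [e3, h2]
  have hcS : 0 < c * S := mul_pos hc hS0
  have claim1 : R * s ≤ c * S^2 := by
    by_contra hD
    push_neg at hD
    obtain ⟨t, ht⟩ : ∃ t, t = (R * s - c * S^2) / (2 * c * S) := ⟨_, rfl⟩
    have ht0 : 0 < t := by rw [ht]; exact div_pos (by linarith) (by positivity)
    have hthis := hfac (X + t) (by linarith)
    have e : c * S * t = (R * s - c * S^2) / 2 := by
      rw [ht]; field_simp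
    have hlin : c * S * (s + (X + t)) = c * S^2 + c * S * t := by
      rw [hS]; ring
    have hpos : 0 < R * s - c * S * (s + (X + t)) := by
      rw [hlin]; linarith
    nlinarith [mul_pos ht0 hpos, hthis]
  refine ⟨claim1, fun hXpos => ?_⟩
  by_contra hD
  have hD' : R * s < c * S^2 := lt_of_le_of_ne claim1 hD
  obtain ⟨t, ht⟩ : ∃ t, t = min (X / 2) ((c * S^2 - R * s) / (2 * c * S)) := ⟨_, rfl⟩
  have ht0 : 0 < t := by
    rw [ht]; exact lt_min (by linarith) (div_pos (by linarith) (by positivity))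
  have ht1 : t ≤ X / 2 := ht ▸ min_le_left _ _
  have ht2 : t ≤ (c * S^2 - R * s) / (2 * c * S) := ht ▸ min_le_right _ _
  have hthis := hfac (X - t) (by linarith)
  have e : c * S * t ≤ (c * S^2 - R * s) / 2 := by
    have h := mul_le_mul_of_nonneg_left ht2 hcS.le
    calc c * S * t ≤ c * S * ((c * S^2 - R * s) / (2 * c * S)) := h
      _ = (c * S^2 - R * s) / 2 := by field_simp
  have hlin : c * S * (s + (X - t)) = c * S^2 - c * S * t := by
    rw [hS]; ring
  have hneg : 0 < c * S * (s + (X - t)) - R * s := by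
    rw [hlin]; linarith
  nlinarith [mul_pos ht0 hneg, hthis]



/-- Payoff in the reward-distribution Sybil game: player `i` choosing `x i ≥ 0`
receives `R·x_i/(Σ_j x_j) − c·x_i`, with payoff `0` at the all-zero profile. -/
noncomputable def rewardPayoff (R c : ℝ) (n : ℕ) (x : Fin n → ℝ) (i : Fin n) : ℝ :=
  if (∑ j, x j) = 0 then 0 else R * x i / (∑ j, x j) - c * x i

/-- A (pure) Nash equilibrium over strategy sets `[0,∞)`. -/
def IsNashEq (n : ℕ) (U : (Fin n → ℝ) → Fin n → ℝ) (x : Fin n → ℝ) : Prop :=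
  (∀ i, 0 ≤ x i) ∧
  ∀ i : Fin n, ∀ z : ℝ, 0 ≤ z → U (Function.update x i z) i ≤ U x i

/-- For `R, c > 0` and `n ≥ 2`, the profile `x_i = R(n−1)/(c·n²)` is the unique
Nash equilibrium of the reward-distribution game, and every player's payoff there
equals `R/n²`. -/
theorem stmt_1 (R c : ℝ) (n : ℕ) (hR : 0 < R) (hc : 0 < c) (hn : 2 ≤ n) :
    IsNashEq n (rewardPayoff R c n) (fun _ => R * ((n : ℝ) - 1) / (c * n ^ 2)) ∧
    (∀ x : Fin n → ℝ, IsNashEq n (rewardPayoff R c n) x →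
      x = fun _ => R * ((n : ℝ) - 1) / (c * n ^ 2)) ∧
    (∀ i : Fin n,
      rewardPayoff R c n (fun _ => R * ((n : ℝ) - 1) / (c * n ^ 2)) i = R / n ^ 2) := by
  have hn2 : (2:ℝ) ≤ (n:ℝ) := by exact_mod_cast hn
  have hn0 : (0:ℝ) < (n:ℝ) := by linarith
  set X : ℝ := R * ((n:ℝ) - 1) / (c * (n:ℝ) ^ 2) with hXdef
  have hX0 : 0 < X := by
    rw [hXdef]; exact div_pos (mul_pos hR (by linarith)) (by positivity)
  have hconstsum : (∑ _j : Fin n, X) = (n:ℝ) * X := by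
    simp [Finset.sum_const, Finset.card_univ, nsmul_eq_mul]
  have hs0 : 0 < ((n:ℝ) - 1) * X := mul_pos (by linarith) hX0
  have hRs : R * (((n:ℝ) - 1) * X) = c * (((n:ℝ) - 1) * X + X)^2 := by
    rw [hXdef]; field_simp; ring
  have hnX0 : (0:ℝ) < (n:ℝ) * X := mul_pos hn0 hX0
  refine ⟨⟨fun _ => hX0.le, fun i z hz => ?_⟩, ?_, fun i => ?_⟩
  · -- Nash equilibrium
    have hsumu : (∑ j, Function.update (fun _ : Fin n => X) i z j) = ((n:ℝ) - 1) * X + z := by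
      rw [sum_update_fin, hconstsum]; ring
    simp only [rewardPayoff, hsumu, hconstsum, Function.update_self]
    have hsz : ((n:ℝ) - 1) * X + z ≠ 0 := by positivity
    rw [if_neg hsz, if_neg hnX0.ne']
    have h := maximize R c (((n:ℝ) - 1) * X) X hc hs0 hX0.le hRs z hz
    have e : ((n:ℝ) - 1) * X + X = (n:ℝ) * X := by ring
    rw [e] at h
    exact h
  · -- uniqueness
    rintro x ⟨hx0, hbr⟩
    set S : ℝ := ∑ j, x j with hSdef
    have hsub : ∀ i : Fin n, S - x i = ∑ j ∈ Finset.univ.erase i, x j := by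
      intro i
      rw [Finset.sum_erase_eq_sub (Finset.mem_univ i)]
    have hsnn : ∀ i : Fin n, 0 ≤ S - x i := by
      intro i
      rw [hsub i]
      exact Finset.sum_nonneg fun j _ => hx0 j
    have hSnn : 0 ≤ S := Finset.sum_nonneg fun j _ => hx0 j
    -- Step A: S > 0
    have hS0 : 0 < S := by
      rcases hSnn.eq_or_lt with h0 | h
      · exfalso
        have hall : ∀ j : Fin n, x j = 0 := by
          intro j
          have := (Finset.sum_eq_zero_iff_of_nonneg (fun j _ => hx0 j)).mp h0.symm
          exact this j (Finset.mem_univ j)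
        have i0 : Fin n := ⟨0, by omega⟩
        have hz : (0:ℝ) ≤ R / (2 * c) := by positivity
        have h := hbr i0 (R / (2 * c)) hz
        have hzpos : (0:ℝ) < R / (2 * c) := by positivity
        have hsumu : (∑ j, Function.update x i0 (R / (2 * c)) j) = R / (2 * c) := by
          rw [sum_update_fin, ← hSdef, ← h0, hall i0]; ring
        simp only [rewardPayoff, hsumu, ← hSdef, ← h0, Function.update_self] at h
        rw [if_neg hzpos.ne', if_pos trivial] at h
        rw [mul_div_assoc, div_self hzpos.ne', mul_one] at h
        have : c * (R / (2 * c)) = R / 2 := by field_simp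
        rw [this] at h
        linarith
      · exact h
    -- Step B: opponents' sum positive
    have hsB : ∀ i : Fin n, 0 < S - x i := by
      intro i
      rcases (hsnn i).eq_or_lt with h0 | h
      · exfalso
        have hxi : x i = S := by linarith
        have hxip : 0 < x i := by linarith
        have hz : (0:ℝ) ≤ x i / 2 := by linarith
        have h := hbr i (x i / 2) hz
        have hzpos : (0:ℝ) < x i / 2 := by linarith
        have hsumu : (∑ j, Function.update x i (x i / 2) j) = x i / 2 := by
          rw [sum_update_fin, ← hSdef]; linarith
        simp only [rewardPayoff, hsumu, ← hSdef, Function.update_self] at h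
        rw [if_neg hzpos.ne', if_neg hS0.ne'] at h
        rw [mul_div_assoc, div_self hzpos.ne', mul_one] at h
        rw [hxi, mul_div_assoc, div_self hS0.ne', mul_one] at h
        nlinarith [mul_pos hc hxip]
      · exact h
    -- Step C: first-order conditions
    have hfoc : ∀ i : Fin n,
        R * (S - x i) ≤ c * S^2 ∧ (0 < x i → R * (S - x i) = c * S^2) := by
      intro i
      have hne : ∀ z, 0 ≤ z →
          R * z / ((S - x i) + z) - c * z ≤ R * (x i) / ((S - x i) + x i) - c * (x i) := by
        intro z hz
        have h := hbr i z hz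
        have hsumu : (∑ j, Function.update x i z j) = (S - x i) + z := by
          rw [sum_update_fin, ← hSdef]
        have hS' : (∑ j, x j) = (S - x i) + x i := by rw [← hSdef]; ring
        simp only [rewardPayoff, hsumu, hS', Function.update_self] at h
        rw [if_neg (by linarith [hsB i] : (0:ℝ) < S - x i + z).ne',
            if_neg (by linarith [hsB i] : (0:ℝ) < S - x i + x i).ne'] at h
        exact h
      have h := foc R c (S - x i) (x i) hc (hsB i) (hx0 i) hne
      have e : S - x i + x i = S := by ring
      rw [e] at h
      exact h
    -- Step D: all strategies positive
    have hpos : ∀ i : Fin n, 0 < x i := by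
      intro i
      rcases (hx0 i).eq_or_lt with h0 | h
      · exfalso
        obtain ⟨j, hj⟩ : ∃ j : Fin n, 0 < x j := by
          by_contra hno
          push_neg at hno
          have : S ≤ 0 := Finset.sum_nonpos fun j _ => hno j
          linarith
        have h1 : R * S ≤ c * S^2 := by
          have := (hfoc i).1
          rw [← h0] at this
          linarith
        have h2 : R * (S - x j) = c * S^2 := (hfoc j).2 hj
        nlinarith [mul_pos hR hj]
      · exact h
    have heq : ∀ i : Fin n, R * (S - x i) = c * S^2 := fun i => (hfoc i).2 (hpos i)
    -- Sum the FOCs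
    have hsum2 : R * S = (n:ℝ) * (R * S - c * S^2) := by
      have h1 : ∑ j, R * x j = R * S := by rw [← Finset.mul_sum]
      calc R * S = ∑ j, R * x j := h1.symm
        _ = ∑ _j : Fin n, (R * S - c * S^2) :=
            Finset.sum_congr rfl fun j _ => by linarith [heq j]
        _ = (n:ℝ) * (R * S - c * S^2) := by
            simp [Finset.sum_const, Finset.card_univ, nsmul_eq_mul]; ring
    have hcs : (n:ℝ) * c * S = ((n:ℝ) - 1) * R := by
      have h1 : ((n:ℝ) * c * S) * S = (((n:ℝ) - 1) * R) * S := by nlinarith [hsum2]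
      exact mul_right_cancel₀ hS0.ne' h1
    have hSval : S = ((n:ℝ) - 1) * R / ((n:ℝ) * c) := by
      rw [eq_div_iff (by positivity)]
      linear_combination hcs
    funext i
    show x i = X
    have hxi : R * x i = R * S - c * S^2 := by linarith [heq i]
    have hfin : R * x i = R * X := by
      rw [hxi, hSval, hXdef]
      field_simp
      ring
    exact mul_left_cancel₀ hR.ne' hfin
  · -- payoff value
    simp only [rewardPayoff, hconstsum]
    rw [if_neg hnX0.ne']
    have e1 : R * X / ((n:ℝ) * X) = R / (n:ℝ) := by
      rw [div_eq_div_iff (by positivity) hn0.ne']; ring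
    rw [e1, hXdef]
    field_simp
    ring
end

section
/- Let R > 0, c > 0 and n ≥ 2. In the n-player game with payoffs U_i(x) = R·x_i/(Σ_j x_j) − c·x_i on [0,∞)^n, the social welfare Σ_i U_i at the unique Nash equilibrium x_i = R(n−1)/(c·n²) equals R/n, while the supremum of Σ_i U_i(x) over all nonzero profiles x equals R. Hence the Price of Anarchy of this game is n. -/
lemma welfare_eq (R c : ℝ) (n : ℕ) (x : Fin n → ℝ) (hS : (∑ j, x j) ≠ 0) :
    ∑ i, rewardPayoff R c n x i = R - c * ∑ j, x j := by
  simp only [rewardPayoff, if_neg hS]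
  rw [Finset.sum_sub_distrib, ← Finset.sum_div, ← Finset.mul_sum, ← Finset.mul_sum]
  field_simp

/-- For `R, c > 0` and `n ≥ 2`: the social welfare at the unique Nash equilibrium
`x_i = R(n−1)/(c·n²)` equals `R/n`; the supremum of the social welfare over all
nonzero (nonnegative) profiles equals `R`; hence the Price of Anarchy is `n`. -/
theorem stmt_2 (R c : ℝ) (n : ℕ) (hR : 0 < R) (hc : 0 < c) (hn : 2 ≤ n) :
    (∑ i : Fin n, rewardPayoff R c n (fun _ => R * ((n : ℝ) - 1) / (c * n ^ 2)) i
        = R / n) ∧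
    IsLUB {w : ℝ | ∃ x : Fin n → ℝ, (∀ i, 0 ≤ x i) ∧ x ≠ 0 ∧
        w = ∑ i, rewardPayoff R c n x i} R ∧
    R / (R / n) = n := by
  have hn0 : (0:ℝ) < n := by positivity
  have hn1 : (1:ℝ) ≤ (n:ℝ) := by exact_mod_cast Nat.one_le_of_lt hn
  have hn2 : (2:ℝ) ≤ (n:ℝ) := by exact_mod_cast hn
  have hnne : (n:ℝ) ≠ 0 := ne_of_gt hn0
  refine ⟨?_, ?_, ?_⟩
  · set a := R * ((n : ℝ) - 1) / (c * n ^ 2) with ha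
    have haPos : 0 < a := by
      apply div_pos
      · nlinarith
      · positivity
    have hsum : (∑ _j : Fin n, a) = n * a := by
      rw [Finset.sum_const]; simp [mul_comm]
    have hSne : (∑ _j : Fin n, a) ≠ 0 := by
      rw [hsum]; positivity
    rw [welfare_eq R c n _ hSne, hsum, ha]
    field_simp
    ring
  · constructor
    · rintro w ⟨x, hx, hxne, rfl⟩
      have hS0 : 0 ≤ ∑ j, x j := Finset.sum_nonneg fun j _ => hx j
      have hSne : (∑ j, x j) ≠ 0 := by
        intro h
        apply hxne
        funext i
        have := (Finset.sum_eq_zero_iff_of_nonneg (fun j _ => hx j)).mp h i (Finset.mem_univ i)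
        simpa using this
      rw [welfare_eq R c n x hSne]
      nlinarith [lt_of_le_of_ne hS0 (Ne.symm hSne)]
    · intro b hb
      by_contra hlt
      push_neg at hlt
      set ε := (R - b) / 2 with hε
      have hεpos : 0 < ε := by simp [hε]; linarith
      -- profile with sum = ε/c
      set a := ε / (c * n) with ha
      have haPos : 0 < a := by positivity
      have hsum : (∑ _j : Fin n, a) = n * a := by
        rw [Finset.sum_const]; simp [mul_comm]
      have hSne : (∑ _j : Fin n, a) ≠ 0 := by rw [hsum]; positivity
      have hmem : R - ε ∈ {w : ℝ | ∃ x : Fin n → ℝ, (∀ i, 0 ≤ x i) ∧ x ≠ 0 ∧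
          w = ∑ i, rewardPayoff R c n x i} := by
        refine ⟨fun _ => a, fun i => le_of_lt haPos, ?_, ?_⟩
        · intro h
          have := congrFun h ⟨0, by omega⟩
          simp at this
          exact (ne_of_gt haPos) this
        · rw [welfare_eq R c n _ hSne, hsum, ha]
          field_simp
      have := hb hmem
      linarith
  · field_simp
end

section
/- Let R ≥ 0 and c ≥ 0. The reward distribution mechanism r(n) = n·R/2^{n−1} is Sybil-proof for every cost c: for all integers x ≥ 1 and y ≥ 0, x·(R/2^{x+y−1}) − c·x ≤ R/2^{y} − c. That is, a player reporting x identities when y other identities are present earns no more than when reporting a single identity. -/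
/-- The reward distribution mechanism `r(n) = n·R/2^{n−1}` is Sybil-proof for every
cost `c ≥ 0`: a player reporting `x ≥ 1` identities against `y` other identities earns
`x·(R/2^{x+y−1}) − c·x`, which never exceeds `R/2^y − c`, the single-identity payoff. -/
theorem stmt_3 (R c : ℝ) (hR : 0 ≤ R) (hc : 0 ≤ c) :
    ∀ x y : ℕ, 1 ≤ x →
      (x : ℝ) * (R / 2 ^ (x + y - 1)) - c * x ≤ R / 2 ^ y - c := by
  intro x y hx
  have hxy : x + y - 1 = (x - 1) + y := by omega
  have hxle : (x : ℝ) ≤ 2 ^ (x - 1) := by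
    have : x ≤ 2 ^ (x - 1) := by
      have := Nat.lt_two_pow_self (n := x - 1)
      omega
    exact_mod_cast this
  have hx1 : (1 : ℝ) ≤ x := by exact_mod_cast hx
  have h1 : (x : ℝ) * (R / 2 ^ (x + y - 1)) ≤ R / 2 ^ y := by
    rw [hxy, pow_add]
    have heq : (x:ℝ) * (R / (2 ^ (x-1) * 2 ^ y)) = ((x:ℝ) / 2 ^ (x-1)) * (R / 2 ^ y) := by
      field_simp
    rw [heq]
    have hle1 : (x:ℝ) / 2 ^ (x-1) ≤ 1 := by
      rw [div_le_one (by positivity)]; exact hxle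
    calc ((x:ℝ) / 2 ^ (x-1)) * (R / 2 ^ y) ≤ 1 * (R / 2 ^ y) :=
          mul_le_mul_of_nonneg_right hle1 (by positivity)
      _ = R / 2 ^ y := one_mul _
  have h2 : c ≤ c * x := by nlinarith
  linarith
end

section
/- Let R ≥ 0 and let r: {1,2,3,…} → ℝ satisfy 0 ≤ r(n) ≤ R for all n and the Sybil-proofness condition r(1+y)/(1+y) ≥ x·r(x+y)/(x+y) for all integers x ≥ 1 and y ≥ 0. Then r(n) ≤ n·R/2^{n−1} for all n ≥ 1; i.e., r_max(n) = n·R/2^{n−1} is the social-welfare-optimal Sybil-proof reward distribution mechanism. -/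
/-- Optimality of the mechanism `r_max(n) = n·R/2^{n−1}`: any reward distribution
mechanism `r : {1,2,…} → [0,R]` satisfying the (cost-zero) Sybil-proofness condition
`r(1+y)/(1+y) ≥ x·r(x+y)/(x+y)` for all `x ≥ 1, y ≥ 0` obeys `r(n) ≤ n·R/2^{n−1}`. -/
theorem stmt_4 (R : ℝ) (hR : 0 ≤ R) (r : ℕ → ℝ)
    (hr : ∀ n : ℕ, 1 ≤ n → 0 ≤ r n ∧ r n ≤ R)
    (hsp : ∀ x y : ℕ, 1 ≤ x →
      (x : ℝ) * r (x + y) / (x + y) ≤ r (1 + y) / (1 + y)) :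
    ∀ n : ℕ, 1 ≤ n → r n ≤ (n : ℝ) * R / 2 ^ (n - 1) := by
  intro n hn
  induction n, hn using Nat.le_induction with
  | base => simpa using (hr 1 le_rfl).2
  | succ n hn ih =>
    have key := hsp 2 (n - 1) (by norm_num)
    have h1 : 2 + (n - 1) = n + 1 := by omega
    have h2 : 1 + (n - 1) = n := by omega
    rw [h1, h2] at key
    -- key : 2 * r (n+1) / (n+1) ≤ r n / n
    have hnpos : (0:ℝ) < (n:ℝ) := by exact_mod_cast hn
    have hn1pos : (0:ℝ) < (n:ℝ) + 1 := by linarith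
    rw [Nat.cast_sub hn] at key
    push_cast at key
    rw [show (2:ℝ)+((n:ℝ)-1) = (n:ℝ)+1 by ring, show (1:ℝ)+((n:ℝ)-1) = (n:ℝ) by ring] at key
    have hpow : (0:ℝ) < 2 ^ (n - 1) := by positivity
    have hstep : r (n + 1) ≤ ((n:ℝ) + 1) * r n / (2 * n) := by
      rw [div_le_div_iff₀ (by linarith) hnpos] at key
      rw [le_div_iff₀ (by linarith)]
      nlinarith
    have hrn : r n ≤ (n:ℝ) * R / 2 ^ (n - 1) := ih
    have hcast : ((n + 1 : ℕ) : ℝ) = (n:ℝ) + 1 := by push_cast; ring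
    have hsub : n + 1 - 1 = n := by omega
    rw [hcast, hsub]
    have hpowsucc : (2:ℝ) ^ n = 2 * 2 ^ (n - 1) := by
      rw [← pow_succ']
      congr 1
      omega
    rw [hpowsucc]
    calc r (n + 1) ≤ ((n:ℝ) + 1) * r n / (2 * n) := hstep
      _ ≤ ((n:ℝ) + 1) * ((n:ℝ) * R / 2 ^ (n - 1)) / (2 * n) := by
          apply div_le_div_of_nonneg_right _ (by linarith) |>.trans_eq rfl
          · exact mul_le_mul_of_nonneg_left hrn (by linarith)
      _ = ((n:ℝ) + 1) * R / (2 * 2 ^ (n - 1)) := by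
          field_simp
end

section
/- Let R, K > 0 and define f(x) = (R·e/K)·x·e^{−x/K}. For every y ≥ 0 and every x ≥ 0 with x + y > 0, (x/(x+y))·f(x+y) ≤ R·e^{−y/K}, with equality if and only if x = K. Consequently, in the pro-rata game with function f, playing x = K is a strictly dominant strategy for every player. -/
/-- Key: `t * exp (1 - t) ≤ 1`, with equality iff `t = 1`. -/
lemma key_le (t : ℝ) : t * Real.exp (1 - t) ≤ 1 := by
  have h := Real.add_one_le_exp (t - 1)
  have hpos : 0 < Real.exp (1 - t) := Real.exp_pos _
  nlinarith [Real.exp_pos (t - 1), Real.exp_pos (1 - t),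
    mul_pos (Real.exp_pos (t - 1)) (Real.exp_pos (1 - t)),
    (by rw [← Real.exp_add]; norm_num : Real.exp (t - 1) * Real.exp (1 - t) = 1)]

lemma key_lt (t : ℝ) (ht : t ≠ 1) : t * Real.exp (1 - t) < 1 := by
  have h := Real.add_one_lt_exp (x := t - 1) (by intro h; apply ht; linarith)
  nlinarith [Real.exp_pos (t - 1), Real.exp_pos (1 - t),
    (by rw [← Real.exp_add]; norm_num : Real.exp (t - 1) * Real.exp (1 - t) = 1)]

/-- For `f(x) = (R·e/K)·x·e^{−x/K}` and any `y ≥ 0`, `x ≥ 0` with `x + y > 0`,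
the pro-rata payoff `(x/(x+y))·f(x+y)` is at most `R·e^{−y/K}`, with equality iff
`x = K`.  Hence `x = K` is a strictly dominant strategy in the pro-rata game. -/
theorem stmt_5 (R K : ℝ) (hR : 0 < R) (hK : 0 < K) :
    ∀ y : ℝ, 0 ≤ y → ∀ x : ℝ, 0 ≤ x → 0 < x + y →
      (x / (x + y)) * ((R * Real.exp 1 / K) * (x + y) * Real.exp (-(x + y) / K))
          ≤ R * Real.exp (-y / K) ∧
      ((x / (x + y)) * ((R * Real.exp 1 / K) * (x + y) * Real.exp (-(x + y) / K))
          = R * Real.exp (-y / K) ↔ x = K) := by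
  intro y hy x hx hxy
  have hK' : K ≠ 0 := ne_of_gt hK
  have hxy' : x + y ≠ 0 := ne_of_gt hxy
  have hLHS : (x / (x + y)) * ((R * Real.exp 1 / K) * (x + y) * Real.exp (-(x + y) / K))
      = R * Real.exp (-y / K) * ((x / K) * Real.exp (1 - x / K)) := by
    have e2 : (1:ℝ) + (-(x + y) / K) = (-y / K) + (1 - x / K) := by
      field_simp; ring
    have e1 : Real.exp 1 * Real.exp (-(x + y) / K)
        = Real.exp (-y / K) * Real.exp (1 - x / K) := by
      rw [← Real.exp_add, ← Real.exp_add, e2]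
    have step : (x / (x + y)) * ((R * Real.exp 1 / K) * (x + y) * Real.exp (-(x + y) / K))
        = (R * (x / K)) * (Real.exp 1 * Real.exp (-(x + y) / K)) := by
      field_simp
    rw [step, e1]
    ring
  have hpos : 0 < R * Real.exp (-y / K) := mul_pos hR (Real.exp_pos _)
  constructor
  · rw [hLHS]
    calc R * Real.exp (-y / K) * ((x / K) * Real.exp (1 - x / K))
        ≤ R * Real.exp (-y / K) * 1 := by
          exact mul_le_mul_of_nonneg_left (key_le (x / K)) (le_of_lt hpos)
      _ = R * Real.exp (-y / K) := mul_one _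
  · rw [hLHS]
    constructor
    · intro h
      by_contra hne
      have ht : x / K ≠ 1 := by
        intro h1; apply hne; field_simp at h1; linarith
      have := key_lt (x / K) ht
      nlinarith
    · intro h
      subst h
      rw [div_self hK']
      norm_num
end

section
/- Let K > 0. If f: (K,∞) → ℝ is differentiable, nowhere zero, and satisfies (x − K)·f(x) + K·x·f'(x) = 0 for all x > K, then there is a constant C such that f(x) = C·x·e^{−x/K} for all x > K. In particular, f(x) = (R·e/K)·x·e^{−x/K} is the unique such solution whose supremum over x ≥ 0 equals R. -/
lemma aux_max (K : ℝ) (hK : 0 < K) : ∀ x : ℝ, 0 ≤ x →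
    x * Real.exp (-x / K) ≤ K * Real.exp (-1) := by
  intro x _
  have h1 : x / K ≤ Real.exp (x / K - 1) := by
    have := Real.add_one_le_exp (x / K - 1); linarith
  have hmul : Real.exp (x / K - 1) * Real.exp (-x / K) = Real.exp (-1) := by
    rw [← Real.exp_add]; ring_nf
  have h3 : (x / K) * Real.exp (-x / K) ≤ Real.exp (-1) := by
    rw [← hmul]
    exact mul_le_mul_of_nonneg_right h1 (Real.exp_pos _).le
  calc x * Real.exp (-x / K) = K * ((x / K) * Real.exp (-x / K)) := by
        field_simp
    _ ≤ K * Real.exp (-1) := mul_le_mul_of_nonneg_left h3 hK.le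

lemma aux_lub (K R C : ℝ) (hK : 0 < K) (hR : 0 < R) :
    IsLUB {w : ℝ | ∃ x : ℝ, 0 ≤ x ∧ w = C * x * Real.exp (-x / K)} R ↔
      C = R * Real.exp 1 / K := by
  have hKK : -K / K = -1 := by field_simp
  have hmem : C * K * Real.exp (-1) ∈
      {w : ℝ | ∃ x : ℝ, 0 ≤ x ∧ w = C * x * Real.exp (-x / K)} :=
    ⟨K, hK.le, by rw [hKK]⟩
  constructor
  · intro hlub
    have hC : 0 < C := by
      by_contra h
      push_neg at h
      have hub : (0 : ℝ) ∈ upperBounds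
          {w : ℝ | ∃ x : ℝ, 0 ≤ x ∧ w = C * x * Real.exp (-x / K)} := by
        rintro w ⟨x, hx, rfl⟩
        have := (Real.exp_pos (-x / K)).le
        rw [mul_assoc]
        exact mul_nonpos_iff.mpr (Or.inr ⟨h, mul_nonneg hx this⟩)
      linarith [hlub.2 hub]
    have hlub2 : IsLUB {w : ℝ | ∃ x : ℝ, 0 ≤ x ∧ w = C * x * Real.exp (-x / K)}
        (C * K * Real.exp (-1)) := by
      refine ⟨?_, fun b hb => hb hmem⟩
      rintro w ⟨x, hx, rfl⟩
      have := aux_max K hK x hx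
      rw [mul_assoc, mul_assoc]
      exact mul_le_mul_of_nonneg_left this hC.le
    have hRC : R = C * K * Real.exp (-1) := hlub.unique hlub2
    have he : Real.exp (-1) * Real.exp 1 = 1 := by
      rw [← Real.exp_add]; norm_num
    field_simp [hRC]
    nlinarith [Real.exp_pos (-1 : ℝ)]
  · intro hC
    subst hC
    have hval : R * Real.exp 1 / K * K * Real.exp (-1) = R := by
      have he : Real.exp 1 * Real.exp (-1) = 1 := by
        rw [← Real.exp_add]; norm_num
      field_simp
      nlinarith
    refine ⟨?_, fun b hb => by rw [← hval]; exact hb hmem⟩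
    rintro w ⟨x, hx, rfl⟩
    have hC : 0 < R * Real.exp 1 / K :=
      div_pos (mul_pos hR (Real.exp_pos 1)) hK
    calc R * Real.exp 1 / K * x * Real.exp (-x / K)
        ≤ R * Real.exp 1 / K * (K * Real.exp (-1)) := by
          rw [mul_assoc]
          exact mul_le_mul_of_nonneg_left (aux_max K hK x hx) hC.le
      _ = R := by rw [← mul_assoc]; exact hval

/-- Uniqueness of the DSIC pro-rata mechanism: any differentiable nowhere-zero
solution on `(K,∞)` of `(x − K)·f(x) + K·x·f'(x) = 0` has the form
`f(x) = C·x·e^{−x/K}`; and among these, the one whose supremum over `x ≥ 0`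
equals `R` is exactly `C = R·e/K`, i.e. `f(x) = (R·e/K)·x·e^{−x/K}`. -/
theorem stmt_6 (K R : ℝ) (hK : 0 < K) (hR : 0 < R) (f : ℝ → ℝ)
    (hdiff : ∀ x, K < x → DifferentiableAt ℝ f x)
    (hne : ∀ x, K < x → f x ≠ 0)
    (hode : ∀ x, K < x → (x - K) * f x + K * x * deriv f x = 0) :
    ∃ C : ℝ, (∀ x, K < x → f x = C * x * Real.exp (-x / K)) ∧
      (IsLUB {w : ℝ | ∃ x : ℝ, 0 ≤ x ∧ w = C * x * Real.exp (-x / K)} R ↔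
        C = R * Real.exp 1 / K) := by
  set g : ℝ → ℝ := fun x => f x * Real.exp (x / K) / x with hg
  have hK0 : K ≠ 0 := hK.ne'
  have hgderiv : ∀ x ∈ Set.Ioi K, HasDerivAt g 0 x := by
    intro x hx
    rw [Set.mem_Ioi] at hx
    have hx0 : (0 : ℝ) < x := lt_trans hK hx
    have hf : HasDerivAt f (deriv f x) x := (hdiff x hx).hasDerivAt
    have he : HasDerivAt (fun y => Real.exp (y / K)) (Real.exp (x / K) * (1 / K)) x := by
      have h1 : HasDerivAt (fun y : ℝ => y / K) (1 / K) x := (hasDerivAt_id x).div_const K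
      exact (Real.hasDerivAt_exp (x / K)).comp x h1
    have hd := ((hf.mul he).div (hasDerivAt_id x) hx0.ne')
    simp only [id_eq] at hd
    have hnum : (deriv f x * Real.exp (x / K) + f x * (Real.exp (x / K) * (1 / K))) * x
        - f x * Real.exp (x / K) * 1 = 0 := by
      have hode' := hode x hx
      have hE := Real.exp_pos (x / K)
      field_simp
      nlinarith [hode', hE]
    simp only [Pi.mul_apply] at hd
    rw [hnum, zero_div] at hd
    exact hd
  have hconst : ∀ x ∈ Set.Ioi K, g x = g (K + 1) := by
    intro x hx
    have hconv : Convex ℝ (Set.Ioi K) := convex_Ioi K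
    have hdo : DifferentiableOn ℝ g (Set.Ioi K) := fun y hy =>
      ((hgderiv y hy).differentiableAt).differentiableWithinAt
    refine hconv.is_const_of_fderivWithin_eq_zero hdo (fun y hy => ?_) hx
      (by simp only [Set.mem_Ioi]; linarith)
    have h1 : fderivWithin ℝ g (Set.Ioi K) y = fderiv ℝ g y :=
      fderivWithin_of_isOpen isOpen_Ioi hy
    have h2 : HasFDerivAt g ((1 : ℝ →L[ℝ] ℝ).smulRight 0) y := (hgderiv y hy).hasFDerivAt
    rw [h1, h2.fderiv]
    ext; simp
  refine ⟨g (K + 1), ?_, aux_lub K R (g (K + 1)) hK hR⟩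
  intro x hx
  have h := hconst x (Set.mem_Ioi.mpr hx)
  have hx0 : (0 : ℝ) < x := lt_trans hK hx
  have hE : Real.exp (x / K) ≠ 0 := (Real.exp_pos _).ne'
  have h' : f x * Real.exp (x / K) / x = g (K + 1) := by rw [← h]
  have hexp : Real.exp (-x / K) = (Real.exp (x / K))⁻¹ := by
    rw [← Real.exp_neg]; ring_nf
  rw [hexp]
  field_simp at h' ⊢
  linarith [h']
end

section
/- Let R, K > 0, n ≥ 1, and f(x) = (R·e/K)·x·e^{−x/K}. In the n-player pro-rata game with function f, when every player plays x_i = K the total payoff equals f(nK) = R·n·e^{−(n−1)}; since sup_{x>0} f(x) = R, the Price of Anarchy of this dominant-strategy pro-rata mechanism equals n·e^{−n+1} (as a fraction of the optimal welfare R). -/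
/-- Welfare of the DSIC pro-rata mechanism `f(x) = (R·e/K)·x·e^{−x/K}`: at the
symmetric profile where all `n` players play `K`, the total payoff is
`f(nK) = R·n·e^{−(n−1)}`; the supremum of `f` over `x > 0` is `R`; hence the
Price of Anarchy (equilibrium welfare as a fraction of optimal welfare `R`)
equals `n·e^{−n+1}`. -/
theorem stmt_7 (R K : ℝ) (n : ℕ) (hR : 0 < R) (hK : 0 < K) (hn : 1 ≤ n) :
    (∑ _i : Fin n,
        (K / ((n : ℝ) * K)) *
          ((R * Real.exp 1 / K) * ((n : ℝ) * K) * Real.exp (-((n : ℝ) * K) / K))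
        = R * n * Real.exp (-((n : ℝ) - 1))) ∧
    IsLUB {w : ℝ | ∃ x : ℝ, 0 < x ∧
        w = (R * Real.exp 1 / K) * x * Real.exp (-x / K)} R ∧
    (R * n * Real.exp (-((n : ℝ) - 1))) / R = n * Real.exp (-(n : ℝ) + 1) := by
  have hn0 : (0:ℝ) < (n:ℝ) := by exact_mod_cast Nat.lt_of_lt_of_le Nat.zero_lt_one hn
  have hK0 : K ≠ 0 := ne_of_gt hK
  refine ⟨?_, ?_, ?_⟩
  · rw [Finset.sum_const, Finset.card_univ, Fintype.card_fin, nsmul_eq_mul]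
    have h1 : (-((n : ℝ) * K) / K) = -(n:ℝ) := by field_simp
    have h2 : Real.exp (-((n:ℝ) - 1)) = Real.exp 1 * Real.exp (-(n:ℝ)) := by
      rw [← Real.exp_add]; ring_nf
    rw [h1, h2]
    field_simp
  · constructor
    · rintro w ⟨x, hx, rfl⟩
      have hxK : x / K ≤ Real.exp (x / K - 1) := by
        have := Real.add_one_le_exp (x / K - 1)
        linarith
      have hxx : x * Real.exp (-x / K) ≤ K * Real.exp (-1 : ℝ) := by
        have h := mul_le_mul_of_nonneg_right hxK (le_of_lt (Real.exp_pos (-x/K)))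
        rw [← Real.exp_add] at h
        have he : x / K - 1 + -x / K = -1 := by ring
        rw [he] at h
        have : x / K * Real.exp (-x / K) ≤ Real.exp (-1:ℝ) := h
        calc x * Real.exp (-x / K) = K * (x / K * Real.exp (-x / K)) := by field_simp
          _ ≤ K * Real.exp (-1:ℝ) := by
              exact mul_le_mul_of_nonneg_left this (le_of_lt hK)
      have hc : 0 < R * Real.exp 1 / K := by positivity
      calc R * Real.exp 1 / K * x * Real.exp (-x / K)
            = (R * Real.exp 1 / K) * (x * Real.exp (-x / K)) := by ring
        _ ≤ (R * Real.exp 1 / K) * (K * Real.exp (-1:ℝ)) :=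
            mul_le_mul_of_nonneg_left hxx (le_of_lt hc)
        _ = R * (Real.exp 1 * Real.exp (-1:ℝ)) := by field_simp
        _ = R := by rw [← Real.exp_add]; simp
    · intro b hb
      have : R ∈ {w : ℝ | ∃ x : ℝ, 0 < x ∧
          w = (R * Real.exp 1 / K) * x * Real.exp (-x / K)} := by
        refine ⟨K, hK, ?_⟩
        rw [show -K / K = -1 by field_simp, div_mul_cancel₀ _ hK0, mul_assoc,
          ← Real.exp_add]
        simp
      exact hb this
  · rw [div_eq_iff (ne_of_gt hR)]
    have : -(n:ℝ) + 1 = -((n:ℝ) - 1) := by ring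
    rw [this]; ring
end

section
/- Let β: {1,2,3,…} → ℝ satisfy β(n) ≥ 0 for all n, β(1) ≤ 1, and k·β(n−1+k) ≤ β(n) for all integers n ≥ 1 and k ≥ 1. Then β(n) ≤ 1/2^{n−1} for all n ≥ 1, and hence n·β(n) ≤ n/2^{n−1}. -/
theorem le_div_two_pow_of_two_mul_succ_le {K : Type*} [Field K] [LinearOrder K]
    [IsStrictOrderedRing K] {β : ℕ → K} {m : ℕ} (hstep : ∀ n, m ≤ n → 2 * β (n + 1) ≤ β n) :
    ∀ n, m ≤ n → β n ≤ β m / 2 ^ (n - m) := by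
  refine Nat.le_induction (by simp) fun n hmn ih => ?_
  rw [Nat.sub_add_comm hmn, pow_succ, ← div_div, le_div_iff₀ two_pos, mul_comm]
  exact (hstep n hmn).trans ih

theorem stmt_8_general (β : ℕ → ℝ) (h1 : β 1 ≤ 1)
    (hsp : ∀ n k : ℕ, 1 ≤ n → 1 ≤ k → (k : ℝ) * β (n - 1 + k) ≤ β n) :
    ∀ n : ℕ, 1 ≤ n →
      β n ≤ 1 / 2 ^ (n - 1) ∧ (n : ℝ) * β n ≤ (n : ℝ) / 2 ^ (n - 1) := by
  have halving : ∀ n, 1 ≤ n → 2 * β (n + 1) ≤ β n := fun n hn => by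
    simpa [show n - 1 + 2 = n + 1 by omega] using hsp n 2 hn one_le_two
  intro n hn
  have hbound : β n ≤ 1 / 2 ^ (n - 1) :=
    (le_div_two_pow_of_two_mul_succ_le halving n hn).trans (by gcongr)
  refine ⟨hbound, ?_⟩
  rw [← mul_one_div]
  exact mul_le_mul_of_nonneg_left hbound n.cast_nonneg

/-- Core inequality for Sybil-proof cake cutting: if `β(n) ≥ 0`, `β(1) ≤ 1`, and
`k·β(n−1+k) ≤ β(n)` for all `n, k ≥ 1`, then `β(n) ≤ 1/2^{n−1}` and hence
`n·β(n) ≤ n/2^{n−1}` for all `n ≥ 1`. -/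
theorem stmt_8 (β : ℕ → ℝ) (hpos : ∀ n : ℕ, 1 ≤ n → 0 ≤ β n) (h1 : β 1 ≤ 1)
    (hsp : ∀ n k : ℕ, 1 ≤ n → 1 ≤ k → (k : ℝ) * β (n - 1 + k) ≤ β n) :
    ∀ n : ℕ, 1 ≤ n →
      β n ≤ 1 / 2 ^ (n - 1) ∧ (n : ℝ) * β n ≤ (n : ℝ) / 2 ^ (n - 1) :=
  stmt_8_general β h1 hsp
end

section
/- Let r < v_h be reals, n ≥ 2 an integer, l ∈ ℝ, and let F: ℝ → ℝ be differentiable with continuous derivative f and F(u) > 0 for u ∈ (r, v_h]. Define T(v) = F(v)^{−(n+l−1)} · ∫_r^v (n−1)·u·F(u)^{n−2+l}·f(u) du for v ∈ (r, v_h]. Then T is differentiable on (r, v_h) and satisfies (n−1)·v·F(v)^{n−2}·f(v) = (n−1+l)·T(v)·f(v)·F(v)^{n−2} + T'(v)·F(v)^{n−1} for all v ∈ (r, v_h). -/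
open MeasureTheory intervalIntegral

/-!
With `m = n + l - 1` and `G(v) = ∫_r^v (n-1) u F(u)^(n-2+l) f(u) du`, the transfer is
`T = F^(-m) G`, and `F^m` is an integrating factor: the product rule gives
`m T f + T' F = F^(1-m) G'`, and by the fundamental theorem of calculus
`F^(1-m) G'(v) = (n-1) v f(v)` on `(r, v_h)`. Multiplying by `F^(n-2)` gives the
first-order condition.
-/

theorem rpow_neg_mul_deriv_identity {F G : ℝ → ℝ} {f g v : ℝ} (m : ℝ)
    (hF : HasDerivAt F f v) (hFv : 0 < F v) (hG : HasDerivAt G g v) :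
    m * (F v ^ (-m) * G v) * f + deriv (fun w => F w ^ (-m) * G w) v * F v
      = F v ^ (1 - m) * g := by
  have hT : HasDerivAt (fun w => F w ^ (-m) * G w)
      (f * (-m) * F v ^ (-m - 1) * G v + F v ^ (-m) * g) v :=
    (hF.rpow_const (Or.inl hFv.ne')).mul hG
  rw [hT.deriv]
  have hpow_succ : F v ^ (-m - 1) * F v = F v ^ (-m) := by
    rw [← Real.rpow_add_one hFv.ne']; ring_nf
  have hpow_one_sub : F v ^ (-m) * F v = F v ^ (1 - m) := by
    rw [← Real.rpow_add_one hFv.ne']; ring_nf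
  linear_combination (-(f * m * G v)) * hpow_succ + g * hpow_one_sub

theorem stmt_11_general (r vh l : ℝ) (n : ℕ)
    (F f : ℝ → ℝ) (hF : ∀ u, HasDerivAt F (f u) u) (hf : Continuous f)
    (hFpos : ∀ u, r < u → u ≤ vh → 0 < F u)
    (hInt : IntervalIntegrable
      (fun u => ((n : ℝ) - 1) * u * F u ^ ((n : ℝ) - 2 + l) * f u) volume r vh) :
    ∀ v ∈ Set.Ioo r vh,
      DifferentiableAt ℝ
        (fun w => F w ^ (-((n : ℝ) + l - 1)) *
          ∫ u in r..w, ((n : ℝ) - 1) * u * F u ^ ((n : ℝ) - 2 + l) * f u) v ∧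
      ((n : ℝ) - 1) * v * F v ^ ((n : ℝ) - 2) * f v
        = ((n : ℝ) - 1 + l) *
            (F v ^ (-((n : ℝ) + l - 1)) *
              ∫ u in r..v, ((n : ℝ) - 1) * u * F u ^ ((n : ℝ) - 2 + l) * f u) *
            f v * F v ^ ((n : ℝ) - 2) +
          (deriv (fun w => F w ^ (-((n : ℝ) + l - 1)) *
              ∫ u in r..w, ((n : ℝ) - 1) * u * F u ^ ((n : ℝ) - 2 + l) * f u) v) *
            F v ^ ((n : ℝ) - 1) := by
  rintro v ⟨hrv, hvvh⟩
  have hFv : 0 < F v := hFpos v hrv hvvh.le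
  have hFcont : Continuous F := continuous_iff_continuousAt.2 fun u => (hF u).continuousAt
  have hIntegral : HasDerivAt
      (fun w => ∫ u in r..w, ((n : ℝ) - 1) * u * F u ^ ((n : ℝ) - 2 + l) * f u)
      (((n : ℝ) - 1) * v * F v ^ ((n : ℝ) - 2 + l) * f v) v :=
    integral_hasDerivAt_right
      (hInt.mono_set (Set.uIcc_subset_uIcc_left (Set.mem_uIcc_of_le hrv.le hvvh.le)))
      (Measurable.aestronglyMeasurable (by fun_prop)).stronglyMeasurableAtFilter
      (by have := hFcont.continuousAt.rpow_const (p := (n : ℝ) - 2 + l) (Or.inl hFv.ne'); fun_prop)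
  refine ⟨((hF v).differentiableAt.rpow_const (Or.inl hFv.ne')).mul
    hIntegral.differentiableAt, ?_⟩
  have hidentity := rpow_neg_mul_deriv_identity ((n : ℝ) + l - 1) (hF v) hFv hIntegral
  have hpow_cancel : F v ^ (1 - ((n : ℝ) + l - 1)) * F v ^ ((n : ℝ) - 2 + l) = 1 := by
    rw [← Real.rpow_add hFv]; ring_nf; exact Real.rpow_zero _
  set T' := deriv (fun w => F w ^ (-((n : ℝ) + l - 1)) *
    ∫ u in r..w, ((n : ℝ) - 1) * u * F u ^ ((n : ℝ) - 2 + l) * f u) v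
  have hpow_succ : F v ^ ((n : ℝ) - 2) * F v = F v ^ ((n : ℝ) - 1) := by
    rw [← Real.rpow_add_one hFv.ne']; ring_nf
  linear_combination (-F v ^ ((n : ℝ) - 2)) * hidentity
    - ((n : ℝ) - 1) * v * f v * F v ^ ((n : ℝ) - 2) * hpow_cancel
    + T' * hpow_succ

/-- Incentive compatibility of the bidding ring `(T, g)` with `l = (n−1)·g`:
the transfer `T(v) = F(v)^{−(n+l−1)} ∫_r^v (n−1)·u·F(u)^{n−2+l}·f(u) du`
is differentiable on `(r, v_h)` and satisfies the first-order condition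
`(n−1)·v·F(v)^{n−2}·f(v) = (n−1+l)·T(v)·f(v)·F(v)^{n−2} + T'(v)·F(v)^{n−1}`. -/
theorem stmt_11 (r vh l : ℝ) (n : ℕ) (hn : 2 ≤ n) (hrv : r < vh)
    (F f : ℝ → ℝ) (hF : ∀ u, HasDerivAt F (f u) u) (hf : Continuous f)
    (hFpos : ∀ u, r < u → u ≤ vh → 0 < F u)
    (hInt : IntervalIntegrable
      (fun u => ((n : ℝ) - 1) * u * F u ^ ((n : ℝ) - 2 + l) * f u) volume r vh) :
    ∀ v ∈ Set.Ioo r vh,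
      DifferentiableAt ℝ
        (fun w => F w ^ (-((n : ℝ) + l - 1)) *
          ∫ u in r..w, ((n : ℝ) - 1) * u * F u ^ ((n : ℝ) - 2 + l) * f u) v ∧
      ((n : ℝ) - 1) * v * F v ^ ((n : ℝ) - 2) * f v
        = ((n : ℝ) - 1 + l) *
            (F v ^ (-((n : ℝ) + l - 1)) *
              ∫ u in r..v, ((n : ℝ) - 1) * u * F u ^ ((n : ℝ) - 2 + l) * f u) *
            f v * F v ^ ((n : ℝ) - 2) +
          (deriv (fun w => F w ^ (-((n : ℝ) + l - 1)) *
              ∫ u in r..w, ((n : ℝ) - 1) * u * F u ^ ((n : ℝ) - 2 + l) * f u) v) *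
            F v ^ ((n : ℝ) - 1) :=
  stmt_11_general r vh l n F f hF hf hFpos hInt
end

section
/- Let R ≥ 0, c ≥ 0, and let W: {2,3,4,…} → ℝ satisfy W(2) ≤ R and W(n+1) ≤ ((n+1)/(2n))·(W(n) + c·n) for all n ≥ 2. Then W(n) ≤ (n−1)·R/2^{n−2} + c·n²/2 for all n ≥ 2. -/
/-! Induction on `n`. Feeding the bound for `n` into the recursion, the `R`-term is multiplied by
`(n + 1)(n - 1) / (2n) ≤ n / 2`, which is exactly the halving needed, and the `c`-term
`c n² / 2 + c n` becomes `c (n + 1)(n + 2) / 4 ≤ c (n + 1)² / 2`. -/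

lemma add_one_div_two_mul_mul_sub_one_le {a x : ℝ} (ha : 0 ≤ a) (hx : 0 < x) :
    (x + 1) / (2 * x) * ((x - 1) * a) ≤ x * a / 2 := by
  rw [div_mul_eq_mul_div, div_le_iff₀ (by positivity)]
  nlinarith

lemma add_one_div_two_mul_quadratic_le {c x : ℝ} (hc : 0 ≤ c) (hx : 0 < x) :
    (x + 1) / (2 * x) * (c * x ^ 2 / 2 + c * x) ≤ c * (x + 1) ^ 2 / 2 := by
  have hfactor :
      (x + 1) / (2 * x) * (c * x ^ 2 / 2 + c * x) = c * (x + 1) * (x + 2) / 4 := by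
    field_simp
    ring
  rw [hfactor]
  nlinarith [mul_nonneg hc hx.le]

/-- The recursive welfare bound from Theorem 3.1: if `W(2) ≤ R` and
`W(n+1) ≤ ((n+1)/(2n))·(W(n) + c·n)` for all `n ≥ 2`, then
`W(n) ≤ (n−1)·R/2^{n−2} + c·n²/2` for all `n ≥ 2`. -/
theorem stmt_12 (R c : ℝ) (hR : 0 ≤ R) (hc : 0 ≤ c) (W : ℕ → ℝ)
    (h2 : W 2 ≤ R)
    (hrec : ∀ n : ℕ, 2 ≤ n →
      W (n + 1) ≤ (((n : ℝ) + 1) / (2 * n)) * (W n + c * n)) :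
    ∀ n : ℕ, 2 ≤ n →
      W n ≤ ((n : ℝ) - 1) * R / 2 ^ (n - 2) + c * (n : ℝ) ^ 2 / 2 := by
  intro n hn
  induction n, hn using Nat.le_induction with
  | base =>
    norm_num
    linarith
  | succ n hn ih =>
    have hx : (0 : ℝ) < n := by positivity
    have hpow : (2 : ℝ) ^ (n + 1 - 2) = 2 * 2 ^ (n - 2) := by
      rw [show n + 1 - 2 = n - 2 + 1 by omega, pow_succ']
    calc W (n + 1) ≤ ((n : ℝ) + 1) / (2 * n) * (W n + c * n) := hrec n hn
      _ ≤ ((n : ℝ) + 1) / (2 * n) *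
          (((n : ℝ) - 1) * (R / 2 ^ (n - 2)) + (c * n ^ 2 / 2 + c * n)) := by
        refine mul_le_mul_of_nonneg_left ?_ (by positivity)
        rw [← mul_div_assoc]
        linarith
      _ = ((n : ℝ) + 1) / (2 * n) * (((n : ℝ) - 1) * (R / 2 ^ (n - 2)))
          + ((n : ℝ) + 1) / (2 * n) * (c * n ^ 2 / 2 + c * n) := mul_add _ _ _
      _ ≤ n * (R / 2 ^ (n - 2)) / 2 + c * (n + 1) ^ 2 / 2 :=
        add_le_add (add_one_div_two_mul_mul_sub_one_le (by positivity) hx)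
          (add_one_div_two_mul_quadratic_le hc hx)
      _ = ((↑(n + 1) : ℝ) - 1) * R / 2 ^ (n + 1 - 2) + c * (↑(n + 1) : ℝ) ^ 2 / 2 := by
        rw [hpow]
        push_cast
        ring
end

section
/- Let K, R > 0, n ≥ 2, and ε ∈ (K/n, K). Define the piecewise-linear concave function f_ε(x) = R·x/(K−ε) for 0 ≤ x ≤ K−ε and f_ε(x) = R·(K−x)/ε for x > K−ε. Then the point q = K·(n−1)/n lies in the open region (K−ε, K) where f_ε is differentiable, satisfies the equilibrium first-order condition (n−1)·f_ε(q) + q·f_ε'(q) = 0, and the resulting equilibrium social welfare is f_ε(q) = R·K/(n·ε), which tends to R as ε decreases to K/n. -/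
open Filter Set

/-- Near-optimal pro-rata welfare with a known number of players (Prop. 2.4):
for the piecewise-linear concave `f_ε` (slope `R/(K−ε)` up to `K−ε`, then slope
`−R/ε`), the point `q = K(n−1)/n` lies in `(K−ε, K)` where `f_ε` is differentiable
with derivative `−R/ε`, satisfies the equilibrium first-order condition
`(n−1)·f_ε(q) + q·f_ε'(q) = 0`, and the equilibrium welfare `f_ε(q) = R·K/(n·ε)`
tends to `R` as `ε ↓ K/n`. -/
theorem stmt_16 (K R : ℝ) (n : ℕ) (hK : 0 < K) (hR : 0 < R) (hn : 2 ≤ n)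
    (ε : ℝ) (hε1 : K / n < ε) (hε2 : ε < K) :
    K - ε < K * ((n : ℝ) - 1) / n ∧
    K * ((n : ℝ) - 1) / n < K ∧
    HasDerivAt (fun x : ℝ => if x ≤ K - ε then R * x / (K - ε) else R * (K - x) / ε)
      (-(R / ε)) (K * ((n : ℝ) - 1) / n) ∧
    ((n : ℝ) - 1) *
        (if K * ((n : ℝ) - 1) / n ≤ K - ε then R * (K * ((n : ℝ) - 1) / n) / (K - ε)
          else R * (K - K * ((n : ℝ) - 1) / n) / ε) +
      (K * ((n : ℝ) - 1) / n) * (-(R / ε)) = 0 ∧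
    (if K * ((n : ℝ) - 1) / n ≤ K - ε then R * (K * ((n : ℝ) - 1) / n) / (K - ε)
        else R * (K - K * ((n : ℝ) - 1) / n) / ε)
      = R * K / (n * ε) ∧
    Tendsto (fun e : ℝ => R * K / (n * e)) (nhdsWithin (K / n) (Ioi (K / n)))
      (nhds R) := by
  have hn0 : (0:ℝ) < n := by positivity
  have hn0' : (n:ℝ) ≠ 0 := ne_of_gt hn0
  have hε0 : 0 < ε := lt_trans (by positivity) hε1
  set q := K * ((n : ℝ) - 1) / n with hq
  have hKq : K - q = K / n := by rw [hq]; field_simp; ring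
  have h1 : K - ε < q := by
    have : K - q < ε := by rw [hKq]; exact hε1
    linarith
  have h2 : q < K := by
    have : 0 < K - q := by rw [hKq]; positivity
    linarith
  have hnotle : ¬ q ≤ K - ε := not_le.mpr h1
  refine ⟨h1, h2, ?_, ?_, ?_, ?_⟩
  · have hderiv : HasDerivAt (fun x : ℝ => R * (K - x) / ε) (-(R / ε)) q := by
      have : HasDerivAt (fun x : ℝ => R * (K - x) / ε) (R * (0 - 1) / ε) q := by
        exact (((hasDerivAt_const q K).sub (hasDerivAt_id q)).const_mul R).div_const ε
      convert this using 1; ring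
    refine hderiv.congr_of_eventuallyEq ?_
    filter_upwards [Ioi_mem_nhds h1] with x hx
    rw [if_neg (not_le.mpr hx)]
  · rw [if_neg hnotle, hKq]
    simp only [hq]
    field_simp
    ring
  · rw [if_neg hnotle, hKq]
    field_simp
  · have hc : ContinuousAt (fun e : ℝ => R * K / (n * e)) (K / n) := by
      apply ContinuousAt.div continuousAt_const (by fun_prop)
      have : (n:ℝ) * (K / n) = K := by field_simp
      rw [this]; exact ne_of_gt hK
    have hv : R * K / ((n:ℝ) * (K / n)) = R := by
      rw [show (n:ℝ) * (K / n) = K by field_simp]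
      field_simp
    have := hc.continuousWithinAt.tendsto (s := Ioi (K / (n:ℝ)))
    simpa [hv] using this
end
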